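/- arXiv:1604.07193 — 3 statements merged into one kernel-verified Lean document; each statement's English description precedes it below -/
import Mathlib

section
/- Let C be a linear code over F_{q^2} of length n with C^q ⊆ C, and suppose C^⊥ = x*C' for some linear code C' with C ⊆ C', where x has all coordinates in F_q^×. If y ∈ F_{q^2}^n satisfies y^{q+1} = x coordinatewise, then the code y*C is Hermitian self-orthogonal, i.e., (y*C)^q ⊆ (y*C)^⊥. -/
/-- The Euclidean dual of a linear code `C ⊆ K^n`. -/
def dualCode {K : Type*} [Field K] {n : ℕ} (C : Submodule K (Fin n → K)) :
    Submodule K (Fin n → K) where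
  carrier := {v | ∀ c ∈ C, ∑ i, v i * c i = 0}
  add_mem' := by
    intro a b ha hb c hc
    simp only [Set.mem_setOf_eq, Pi.add_apply, add_mul] at *
    rw [Finset.sum_add_distrib, ha c hc, hb c hc, add_zero]
  zero_mem' := by intro c hc; simp
  smul_mem' := by
    intro t a ha c hc
    simp only [Set.mem_setOf_eq, Pi.smul_apply, smul_eq_mul, mul_assoc]
    rw [← Finset.mul_sum, ha c hc, mul_zero]

/-- The Euclidean orthogonal of a subset of `K^n`. -/
def dualSet {K : Type*} [Field K] {n : ℕ} (S : Set (Fin n → K)) : Set (Fin n → K) :=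
  {v | ∀ c ∈ S, ∑ i, v i * c i = 0}

/-- If `C ⊆ C'` are codes over `F_{q^2}` with `C^q = C` and `C^⊥ = x * C'`, where `x` has all
coordinates nonzero and lying in `F_q`, and `y^{q+1} = x` coordinatewise, then `y * C` is
Hermitian self-orthogonal: `(y*C)^q ⊆ (y*C)^⊥`. -/
theorem stmt6 {q n : ℕ} (hq : IsPrimePow q) {K : Type*} [Field K] [Fintype K]
    (hK : Fintype.card K = q ^ 2) (C C' : Submodule K (Fin n → K)) (x y : Fin n → K)
    (hCC' : C ≤ C')
    (hCq : (fun c : Fin n → K => fun i => (c i) ^ q) '' C = (C : Set (Fin n → K)))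
    (hx : ∀ i, x i ≠ 0 ∧ (x i) ^ q = x i)
    (hdual : (dualCode C : Set (Fin n → K)) = (fun c => x * c) '' (C' : Set (Fin n → K)))
    (hy : ∀ i, (y i) ^ (q + 1) = x i) :
    (fun c : Fin n → K => fun i => (c i) ^ q) '' ((fun c => y * c) '' (C : Set (Fin n → K))) ⊆
      dualSet ((fun c => y * c) '' (C : Set (Fin n → K))) := by
  rintro v ⟨w, ⟨c, hc, rfl⟩, rfl⟩ u ⟨d, hd, rfl⟩
  -- c^q ∈ C
  have hcq : (fun i => (c i) ^ q) ∈ C := by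
    rw [← SetLike.mem_coe, ← hCq]; exact ⟨c, hc, rfl⟩
  have hmem : x * (fun i => (c i) ^ q) ∈ (dualCode C : Set (Fin n → K)) := by
    rw [hdual]; exact ⟨_, hCC' hcq, rfl⟩
  have h0 : ∑ i, (x i * (c i) ^ q) * d i = 0 := hmem d hd
  calc ∑ i, ((y * c) i) ^ q * (y * d) i
      = ∑ i, (x i * (c i) ^ q) * d i := by
        refine Finset.sum_congr rfl fun i _ => ?_
        simp only [Pi.mul_apply, mul_pow]
        rw [show (y i) ^ q * (c i) ^ q * ((y i) * d i)
            = ((y i) ^ q * (y i)) * ((c i) ^ q * d i) by ring,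
          ← pow_succ, hy i]
        ring
    _ = 0 := h0
end

section
/- (Delsarte duality consequence) For a linear code C over F_{q^r} of length n, the dual (over F_q) of the subfield subcode C ∩ F_q^n equals the trace code of the dual: (C|F_q)^⊥ = tr(C^⊥). -/
/-- The trace map `tr(x) = x + x^q + ... + x^(q^(r-1))` on a field. -/
def tr (q r : ℕ) {K : Type*} [Field K] (a : K) : K := ∑ i ∈ Finset.range r, a ^ q ^ i

/-!
Let `F ⊆ K` be the fixed field of `x ↦ x ^ q`. The trace `T = tr q r` is a nonzero `F`-linear
map `K → F` (nonzero because it is a polynomial of degree `q ^ (r - 1) < |K|`), and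
`∑ wᵢ T(uᵢ) = T(∑ wᵢ uᵢ)` for `w ∈ F^n`. As `C^⊥` is closed under `K`-scalars and `T(a z) = 0`
for all `a` forces `z = 0`, a vector `w ∈ F^n` is orthogonal to `tr(C^⊥)` iff it is orthogonal to
`C^⊥`, i.e. iff `w ∈ C`. So `tr(C^⊥)^⊥ = C|F`, and dualising once more gives the theorem.
-/

section DualCode

variable {K : Type*} [Field K] {n : ℕ}

lemma mem_dualCode {C : Submodule K (Fin n → K)} {v : Fin n → K} :
    v ∈ dualCode C ↔ ∀ c ∈ C, ∑ i, v i * c i = 0 :=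
  Iff.rfl

lemma dualCode_eq_orthogonal (C : Submodule K (Fin n → K)) :
    dualCode C = LinearMap.BilinForm.orthogonal (dotProductBilin K K) C := by
  ext v
  simp only [LinearMap.BilinForm.mem_orthogonal_iff, dotProductBilin_apply_apply,
    dotProduct_comm _ v]
  rfl

lemma dotProductBilin_isRefl :
    LinearMap.BilinForm.IsRefl (dotProductBilin K K : LinearMap.BilinForm K (Fin n → K)) :=
  fun v w h => (dotProduct_comm w v).trans h

lemma dotProductBilin_nondegenerate :
    (dotProductBilin K K : LinearMap.BilinForm K (Fin n → K)).Nondegenerate :=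
  ⟨fun v hv => dotProduct_eq_zero v hv,
    fun w hw => dotProduct_eq_zero w fun v => dotProduct_comm v w ▸ hw v⟩

@[simp]
lemma dualCode_dualCode (C : Submodule K (Fin n → K)) : dualCode (dualCode C) = C := by
  rw [dualCode_eq_orthogonal, dualCode_eq_orthogonal,
    LinearMap.BilinForm.orthogonal_orthogonal dotProductBilin_nondegenerate dotProductBilin_isRefl]

end DualCode

section Delsarte

variable {F K : Type*} [Field F] [Field K] [Algebra F K] {n : ℕ}

variable (F) in
def subfieldSubcode (C : Submodule K (Fin n → K)) : Submodule F (Fin n → F) :=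
  (C.restrictScalars F).comap ((Algebra.linearMap F K).compLeft (Fin n))

def traceCode (T : K →ₗ[F] F) (D : Submodule K (Fin n → K)) : Submodule F (Fin n → F) :=
  (D.restrictScalars F).map (T.compLeft (Fin n))

lemma sum_mul_apply_eq_apply_sum (T : K →ₗ[F] F) (w : Fin n → F) (u : Fin n → K) :
    ∑ i, w i * T (u i) = T (∑ i, algebraMap F K (w i) * u i) := by
  simp only [map_sum, ← Algebra.smul_def, map_smul, smul_eq_mul]

lemma eq_zero_of_forall_apply_mul_eq_zero {T : K →ₗ[F] F} (hT : T ≠ 0) {z : K}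
    (hz : ∀ a, T (a * z) = 0) : z = 0 := by
  by_contra hz0
  obtain ⟨x, hx⟩ : ∃ x, T x ≠ 0 := by simpa [LinearMap.ext_iff] using hT
  exact hx (by simpa [hz0] using hz (x * z⁻¹))

lemma dualCode_traceCode_dualCode {T : K →ₗ[F] F} (hT : T ≠ 0) (C : Submodule K (Fin n → K)) :
    dualCode (traceCode T (dualCode C)) = subfieldSubcode F C := by
  ext w
  let ιw : Fin n → K := fun i => algebraMap F K (w i)
  have hC : w ∈ subfieldSubcode F C ↔ ∀ u ∈ dualCode C, ∑ i, ιw i * u i = 0 := by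
    conv_lhs => rw [subfieldSubcode, ← dualCode_dualCode C]
    exact forall₂_congr fun u _ => by simp only [ιw, mul_comm]; rfl
  have hD : w ∈ dualCode (traceCode T (dualCode C)) ↔
      ∀ u ∈ dualCode C, T (∑ i, ιw i * u i) = 0 := by
    simp only [mem_dualCode, traceCode, Submodule.mem_map, Submodule.restrictScalars_mem,
      forall_exists_index, and_imp, forall_apply_eq_imp_iff₂, LinearMap.compLeft_apply,
      Function.comp_apply, sum_mul_apply_eq_apply_sum, ιw]
  rw [hC, hD]
  refine ⟨fun h u hu => eq_zero_of_forall_apply_mul_eq_zero hT fun a => ?_,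
    fun h u hu => by rw [h u hu, map_zero]⟩
  simpa [Finset.mul_sum, mul_left_comm] using h (a • u) ((dualCode C).smul_mem a hu)

theorem dualCode_subfieldSubcode {T : K →ₗ[F] F} (hT : T ≠ 0) (C : Submodule K (Fin n → K)) :
    dualCode (subfieldSubcode F C) = traceCode T (dualCode C) := by
  rw [← dualCode_traceCode_dualCode hT, dualCode_dualCode]

end Delsarte

section Subfield

variable {K : Type*} [Field K] {n : ℕ} (F : Subfield K)

lemma image_coe_dualCode_subfieldSubcode (C : Submodule K (Fin n → K)) :
    (fun w : Fin n → F => fun i => (w i : K)) '' dualCode (subfieldSubcode F C) =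
      {v | (∀ i, v i ∈ F) ∧ ∀ c ∈ C, (∀ i, c i ∈ F) → ∑ i, v i * c i = 0} := by
  ext v
  constructor
  · rintro ⟨w, hw, rfl⟩
    refine ⟨fun i => (w i).2, fun c hc hcF => ?_⟩
    have := hw (fun i => ⟨c i, hcF i⟩) hc
    simpa using congrArg ((↑) : F → K) this
  · rintro ⟨hvF, hv⟩
    refine ⟨fun i => ⟨v i, hvF i⟩, fun c hc => Subtype.ext ?_, rfl⟩
    simpa [Algebra.algebraMap_ofSubsemiring_apply] using hv _ hc fun i => (c i).2

lemma image_coe_traceCode (T : K →ₗ[F] F) (D : Submodule K (Fin n → K)) :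
    (fun w : Fin n → F => fun i => (w i : K)) '' traceCode T D =
      (fun (u : Fin n → K) i => (T (u i) : K)) '' D := by
  rw [traceCode, Submodule.map_coe, Set.image_image]
  rfl

end Subfield

section Trace

open Finset Polynomial

variable {K : Type*} [Field K]

lemma exists_tr_ne_zero [Fintype K] {q r : ℕ} (hK : Fintype.card K = q ^ r) :
    ∃ x : K, tr q r x ≠ 0 := by
  have hqr : 1 < q ^ r := hK ▸ Fintype.one_lt_card
  have hr : r ≠ 0 := by rintro rfl; simp at hqr
  have hq : 1 < q := (Nat.one_lt_pow_iff hr).mp hqr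
  let P : K[X] := ∑ i ∈ range r, X ^ q ^ i
  have hP : P.coeff 1 = 1 := by
    simp [P, coeff_X_pow, eq_comm, hq.ne', Nat.pos_of_ne_zero hr]
  have hdeg : P.natDegree < Fintype.card K := by
    refine (natDegree_sum_le_of_forall_le _ _ (n := q ^ (r - 1)) fun i hi => ?_).trans_lt ?_
    · rw [natDegree_X_pow]
      exact Nat.pow_le_pow_right hq.le (by simp at hi; omega)
    · rw [hK]
      exact Nat.pow_lt_pow_right hq (by omega)
  obtain ⟨x, hx⟩ := P.exists_eval_ne_zero_of_natDegree_lt_card (by rintro h; simp [h] at hP)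
    (by simpa using hdeg)
  exact ⟨x, by simpa [P, tr, eval_finsetSum] using hx⟩

variable {p s r : ℕ} [ExpChar K p]

variable (K p s) in
def iterateFrobeniusFixedField : Subfield K :=
  (iterateFrobenius K p s).eqLocusField (RingHom.id K)

lemma mem_iterateFrobeniusFixedField {x : K} :
    x ∈ iterateFrobeniusFixedField K p s ↔ x ^ p ^ s = x :=
  Iff.rfl

lemma tr_eq_sum_iterateFrobenius (x : K) :
    tr (p ^ s) r x = ∑ i ∈ range r, iterateFrobenius K p (s * i) x := by
  simp [tr, iterateFrobenius_def, pow_mul]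

lemma tr_add (x y : K) : tr (p ^ s) r (x + y) = tr (p ^ s) r x + tr (p ^ s) r y := by
  simp only [tr_eq_sum_iterateFrobenius, map_add, sum_add_distrib]

lemma tr_mul_of_mem {c : K} (hc : c ∈ iterateFrobeniusFixedField K p s) (x : K) :
    tr (p ^ s) r (c * x) = c * tr (p ^ s) r x := by
  have hc_pow (i : ℕ) : c ^ (p ^ s) ^ i = c := by
    induction i with
    | zero => simp
    | succ i ih => rw [pow_succ, pow_mul, ih, mem_iterateFrobeniusFixedField.mp hc]
  simp only [tr, mul_sum, mul_pow, hc_pow]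

lemma tr_mem_iterateFrobeniusFixedField [Fintype K] (hK : Fintype.card K = (p ^ s) ^ r) (x : K) :
    tr (p ^ s) r x ∈ iterateFrobeniusFixedField K p s := by
  set f : ℕ → K := fun i => x ^ (p ^ s) ^ i
  have hshift : (tr (p ^ s) r x) ^ p ^ s = ∑ i ∈ range r, f (i + 1) := by
    rw [← iterateFrobenius_def, tr, map_sum]
    exact sum_congr rfl fun i _ => by rw [iterateFrobenius_def, ← pow_mul, ← pow_succ]
  have hperiod : f r = f 0 := by simp [f, ← hK, FiniteField.pow_card]
  have := sum_range_succ' f r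
  rw [sum_range_succ, hperiod] at this
  rw [mem_iterateFrobeniusFixedField, hshift]
  exact add_right_cancel this.symm

def trLinearMap [Fintype K] (hK : Fintype.card K = (p ^ s) ^ r) :
    K →ₗ[iterateFrobeniusFixedField K p s] iterateFrobeniusFixedField K p s where
  toFun x := ⟨tr (p ^ s) r x, tr_mem_iterateFrobeniusFixedField hK x⟩
  map_add' x y := Subtype.ext (tr_add x y)
  map_smul' c x := Subtype.ext (tr_mul_of_mem c.2 x)

lemma trLinearMap_ne_zero [Fintype K] (hK : Fintype.card K = (p ^ s) ^ r) :
    trLinearMap hK ≠ 0 := by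
  obtain ⟨x, hx⟩ := exists_tr_ne_zero hK
  exact fun h => hx (congrArg Subtype.val (LinearMap.congr_fun h x))

end Trace

/-- Delsarte's theorem: `(C|F_q)^⊥ = tr(C^⊥)`, where `F_q` is the fixed field of `x ↦ x^q`
inside `F_{q^r}` and duals are Euclidean. -/
theorem stmt10 {q r n : ℕ} (hq : IsPrimePow q) {K : Type*} [Field K] [Fintype K]
    (hK : Fintype.card K = q ^ r) (C : Submodule K (Fin n → K)) :
    {v : Fin n → K | (∀ i, (v i) ^ q = v i) ∧
        ∀ c ∈ C, (∀ i, (c i) ^ q = c i) → ∑ i, v i * c i = 0} =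
      (fun c : Fin n → K => fun i => tr q r (c i)) '' (dualCode C : Set (Fin n → K)) := by
  obtain ⟨p, s, hp, -, rfl⟩ := hq
  have : Fact p.Prime := ⟨hp.nat_prime⟩
  have : CharP K p := charP_of_card_eq_prime_pow (hK.trans (pow_mul p s r).symm)
  let F := iterateFrobeniusFixedField K p s
  calc _ = (fun w : Fin n → F => fun i => (w i : K)) '' dualCode (subfieldSubcode F C) :=
        (image_coe_dualCode_subfieldSubcode F C).symm
    _ = (fun w : Fin n → F => fun i => (w i : K)) '' traceCode (trLinearMap hK) (dualCode C) := by
        rw [dualCode_subfieldSubcode (trLinearMap_ne_zero hK)]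
    _ = _ := image_coe_traceCode F _ _
end

section
/- The numerical semigroup generated by two coprime positive integers a and b is symmetric: an integer x lies in the semigroup ⟨a,b⟩ if and only if F - x does not, where F = ab - a - b is the Frobenius number. Equivalently, for every integer x, exactly one of x and ab - a - b - x belongs to ⟨a,b⟩. -/
/-!
If `x` and `F - x` were both in `⟨a,b⟩`, so would be `F = ab - a - b`, i.e. `ab = (M+1)a + (N+1)b`,
which coprimality forbids. Conversely, coprimality lets us write any integer as `x = ma + nb`
with `0 ≤ n < a`; if `m < 0` then `F - x = (-1-m)a + (a-1-n)b` has nonnegative coefficients.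
-/

/-- Membership of an integer in the numerical semigroup `⟨a,b⟩`. -/
def IsRepresentable (a b : ℕ) (x : ℤ) : Prop :=
  ∃ m n : ℕ, x = m * a + n * b

theorem Int.exists_eq_mul_add_mul_of_isCoprime {a b : ℤ} (hab : IsCoprime a b) (ha : 0 < a)
    (x : ℤ) : ∃ m n : ℤ, 0 ≤ n ∧ n < a ∧ x = m * a + n * b := by
  obtain ⟨u, v, huv⟩ := hab
  refine ⟨x * u + x * v / a * b, x * v % a, Int.emod_nonneg _ ha.ne', Int.emod_lt_of_pos _ ha, ?_⟩
  have hdiv := Int.emod_add_mul_ediv (x * v) a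
  linear_combination (-x) * huv - b * hdiv

namespace IsRepresentable

variable {a b : ℕ}

theorem add {x y : ℤ} (hx : IsRepresentable a b x) (hy : IsRepresentable a b y) :
    IsRepresentable a b (x + y) := by
  obtain ⟨m, n, rfl⟩ := hx
  obtain ⟨m', n', rfl⟩ := hy
  exact ⟨m + m', n + n', by push_cast; ring⟩

theorem of_nonneg {x m n : ℤ} (hm : 0 ≤ m) (hn : 0 ≤ n) (hx : x = m * a + n * b) :
    IsRepresentable a b x := by
  lift m to ℕ using hm
  lift n to ℕ using hn
  exact ⟨m, n, hx⟩

theorem not_frobenius (hco : Nat.Coprime a b) : ¬ IsRepresentable a b (a * b - a - b) := by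
  rintro ⟨M, N, h⟩
  apply hco.mul_add_mul_ne_mul M.succ_ne_zero N.succ_ne_zero
  have : ((M + 1) * a + (N + 1) * b : ℤ) = a * b := by linear_combination -h
  exact_mod_cast this

theorem not_and_sub (hco : Nat.Coprime a b) (x : ℤ) :
    ¬ (IsRepresentable a b x ∧ IsRepresentable a b (a * b - a - b - x)) := by
  rintro ⟨hx, hy⟩
  exact not_frobenius hco (by simpa using hx.add hy)

theorem or_sub (ha : 0 < a) (hco : Nat.Coprime a b) (x : ℤ) :
    IsRepresentable a b x ∨ IsRepresentable a b (a * b - a - b - x) := by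
  obtain ⟨m, n, hn0, hna, hx⟩ :=
    Int.exists_eq_mul_add_mul_of_isCoprime (Nat.isCoprime_iff_coprime.mpr hco) (by omega) x
  rcases le_or_gt 0 m with hm | hm
  · exact .inl (of_nonneg hm hn0 hx)
  · exact .inr (of_nonneg (m := -1 - m) (n := a - 1 - n) (by omega) (by omega)
      (by rw [hx]; ring))

end IsRepresentable

theorem stmt13_general (a b : ℕ) (ha : 2 ≤ a) (hco : Nat.Coprime a b) :
    ∀ x : ℤ, (∃ m n : ℕ, x = m * a + n * b) ↔
      ¬ ∃ m n : ℕ, (a * b - a - b : ℤ) - x = m * a + n * b := fun x =>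
  ⟨fun hx hy => IsRepresentable.not_and_sub hco x ⟨hx, hy⟩,
    (IsRepresentable.or_sub (by omega) hco x).resolve_right⟩

/-- The numerical semigroup `⟨a,b⟩` generated by coprime `a, b ≥ 2` is symmetric with
Frobenius number `ab - a - b`. -/
theorem stmt13 (a b : ℕ) (ha : 2 ≤ a) (hb : 2 ≤ b) (hco : Nat.Coprime a b) :
    ∀ x : ℤ, (∃ m n : ℕ, x = m * a + n * b) ↔
      ¬ ∃ m n : ℕ, (a * b - a - b : ℤ) - x = m * a + n * b :=
  stmt13_general a b ha hco
end
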